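/- Let Σ > 0, let c ∈ ℝ⁴ with c₁ ≠ 0, and for ζ = (ν,σ,η,ξ) ∈ ℝ⁴ define b^C(ζ) = ν·c₁ + (c₂/(2Σ))(σ² − Σ²) + (c₃/Σ)·ση + (η² + ξ)·c₄. Let z̃ = (z̃₁,z̃₂,z̃₃,z̃₄) ∈ ℝ⁴ satisfy c^⊤z̃ = 0, and define ν̂ = −(1/c₁)·[ (c₂/(2Σ))·z̃₂² + (c₃/Σ)·z̃₂z̃₃ + c₄·z̃₃² ]. Then for every ψ ∈ ℝ the modified control ζ̌ = ζ⁰(Σ) + ψ·z̃ + ψ²·ν̂·e₁ satisfies the drift condition exactly: b^C(ζ̌) = 0. Moreover ‖ζ̌ − (ζ⁰(Σ) + ψ·z̃)‖ = |ν̂|·ψ². -/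
import Mathlib


open Finset

noncomputable section

namespace Stmt18

/-- The Euclidean norm of a vector in `ℝ^m`. -/
def enorm {m : ℕ} (z : Fin m → ℝ) : ℝ := Real.sqrt (∑ i, z i ^ 2)

/-- The reference control `ζ⁰(Σ) = (0, Σ, 0, 0)`. -/
def zeta0 (Sig : ℝ) : Fin 4 → ℝ := ![0, Sig, 0, 0]

/-- The first standard basis vector `e₁` of `ℝ⁴`. -/
def e1 : Fin 4 → ℝ := fun i => if i = 0 then 1 else 0

/-- The drift function
`b^C(ζ) = ν c₁ + (c₂/(2Σ))(σ² - Σ²) + (c₃/Σ) σ η + (η² + ξ) c₄` for `ζ = (ν,σ,η,ξ)`. -/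
def bC (Sig : ℝ) (c z : Fin 4 → ℝ) : ℝ :=
  z 0 * c 0 + c 1 / (2 * Sig) * (z 1 ^ 2 - Sig ^ 2) + c 2 / Sig * (z 1 * z 2) +
    (z 2 ^ 2 + z 3) * c 3

/-- The correction term `ν̂ = -(1/c₁) [ (c₂/(2Σ)) z̃₂² + (c₃/Σ) z̃₂ z̃₃ + c₄ z̃₃² ]`. -/
def nuHat (Sig : ℝ) (c zt : Fin 4 → ℝ) : ℝ :=
  -(1 / c 0) * (c 1 / (2 * Sig) * zt 1 ^ 2 + c 2 / Sig * (zt 1 * zt 2) + c 3 * zt 2 ^ 2)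

/-- If `c^⊤ z̃ = 0`, then for every `ψ` the modified control
`ζ̌ = ζ⁰(Σ) + ψ z̃ + ψ² ν̂ e₁` satisfies the drift condition exactly, `b^C(ζ̌) = 0`,
and `‖ζ̌ - (ζ⁰(Σ) + ψ z̃)‖ = |ν̂| ψ²`. -/
theorem modified_control_exact_drift
    (Sig : ℝ) (hSig : 0 < Sig) (c : Fin 4 → ℝ) (hc : c 0 ≠ 0)
    (zt : Fin 4 → ℝ) (hzt : ∑ i, c i * zt i = 0) :
    ∀ ψ : ℝ,
      bC Sig c (fun i => zeta0 Sig i + ψ * zt i + ψ ^ 2 * nuHat Sig c zt * e1 i) = 0 ∧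
      enorm (fun i =>
          (zeta0 Sig i + ψ * zt i + ψ ^ 2 * nuHat Sig c zt * e1 i) -
            (zeta0 Sig i + ψ * zt i)) =
        |nuHat Sig c zt| * ψ ^ 2 := by
  intro ψ
  have hzt' : c 0 * zt 0 + c 1 * zt 1 + c 2 * zt 2 + c 3 * zt 3 = 0 := by
    simpa [Fin.sum_univ_four] using hzt
  have h0 : zt 0 = -(c 1 * zt 1 + c 2 * zt 2 + c 3 * zt 3) / c 0 := by
    field_simp
    linarith [hzt']
  have e10 : e1 0 = 1 := rfl
  have e11 : e1 1 = 0 := rfl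
  have e12 : e1 2 = 0 := rfl
  have e13 : e1 3 = 0 := rfl
  constructor
  · simp only [bC, zeta0, e10, e11, e12, e13, nuHat, Matrix.cons_val_zero,
      Matrix.cons_val_one, Matrix.head_cons, Matrix.cons_val_two, Matrix.tail_cons,
      Matrix.cons_val_three, h0]
    field_simp
    ring
  · simp only [enorm, Fin.sum_univ_four, e10, e11, e12, e13, zeta0, Matrix.cons_val_zero,
      Matrix.cons_val_one, Matrix.head_cons, Matrix.cons_val_two, Matrix.tail_cons,
      Matrix.cons_val_three]
    have : (0 + ψ * zt 0 + ψ ^ 2 * nuHat Sig c zt * 1 - (0 + ψ * zt 0)) ^ 2 +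
        (Sig + ψ * zt 1 + ψ ^ 2 * nuHat Sig c zt * 0 - (Sig + ψ * zt 1)) ^ 2 +
        (0 + ψ * zt 2 + ψ ^ 2 * nuHat Sig c zt * 0 - (0 + ψ * zt 2)) ^ 2 +
        (0 + ψ * zt 3 + ψ ^ 2 * nuHat Sig c zt * 0 - (0 + ψ * zt 3)) ^ 2 =
        (|nuHat Sig c zt| * ψ ^ 2) ^ 2 := by
      rw [mul_pow, sq_abs]; ring
    rw [this]
    exact Real.sqrt_sq (by positivity)

end Stmt18
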